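/- Let κ > 0, τ > 0 be constants, and let θ : ℝ × ℝ³ → (0,∞) and q : ℝ × ℝ³ → ℝ³ be C¹ fields satisfying the Cattaneo system: ∂_t ε + div q = 0 and τ ∂_t q^A + κ ∂_{x^A} θ = −q^A for A = 1,2,3, where ε = ε^eq(θ) + (τ/(θκ))‖q‖² with ε^eq C¹. Let s^eq be C¹ with (s^eq)'(u) = (ε^eq)'(u)/u. Then the entropy balance ∂_t( s^eq(θ) + (τ/(2θ²κ))‖q‖² ) + div(q/θ) = ‖q‖²/(κθ²) holds pointwise. -/

import Mathlib

/-- Time derivative of a scalar field on ℝ × ℝ³. -/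
noncomputable def dt (f : ℝ × (Fin 3 → ℝ) → ℝ) (x : ℝ × (Fin 3 → ℝ)) : ℝ :=
  fderiv ℝ f x (1, 0)

/-- Spatial derivative ∂_{x^A} of a scalar field on ℝ × ℝ³. -/
noncomputable def dX (A : Fin 3) (f : ℝ × (Fin 3 → ℝ) → ℝ) (x : ℝ × (Fin 3 → ℝ)) : ℝ :=
  fderiv ℝ f x (0, Pi.single A 1)

/-!
Dividing the energy balance by `θ` and using `(s^eq)' = (ε^eq)'/θ` turns the time derivative of
the entropy density `s^eq(θ) + τ‖q‖²/(2κθ²)` into `-(div q)/θ - τ (q · ∂ₜq)/(κθ²)`. The product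
rule gives `div (q/θ) = (div q)/θ - (q · ∇θ)/θ²`, and contracting the Cattaneo equation with `q`
replaces `κ (q · ∇θ)` by `-‖q‖² - τ (q · ∂ₜq)`, which leaves exactly `‖q‖²/(κθ²)`.
-/

section DirectionalDerivative

variable {E : Type*} [NormedAddCommGroup E] [NormedSpace ℝ E] {x : E}

theorem fderiv_div_apply {f g : E → ℝ} (hf : DifferentiableAt ℝ f x)
    (hg : DifferentiableAt ℝ g x) (hgx : g x ≠ 0) (v : E) :
    fderiv ℝ (fun y => f y / g y) x v =
      fderiv ℝ f x v / g x - f x * fderiv ℝ g x v / g x ^ 2 := by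
  have h : HasFDerivAt (fun y => f y / g y)
      (f x • ((-(g x ^ 2)⁻¹) • fderiv ℝ g x) + (g x)⁻¹ • fderiv ℝ f x) x := by
    simp only [div_eq_mul_inv]
    exact hf.hasFDerivAt.fun_mul ((hasDerivAt_inv hgx).comp_hasFDerivAt x hg.hasFDerivAt)
  rw [h.fderiv]
  simp only [add_apply, smul_apply, smul_eq_mul]
  ring

variable {ι : Type*} [Fintype ι]

theorem fderiv_sum_sq_apply {q : E → ι → ℝ} (hq : ∀ i, DifferentiableAt ℝ (fun y => q y i) x)
    (v : E) :
    fderiv ℝ (fun y => ∑ i, q y i ^ 2) x v = 2 * ∑ i, q x i * fderiv ℝ (fun y => q y i) x v := by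
  have h : HasFDerivAt (fun y => ∑ i, q y i ^ 2)
      (∑ i, (2 • q x i ^ (2 - 1)) • fderiv ℝ (fun y => q y i) x) x :=
    HasFDerivAt.fun_sum fun i _ => (hq i).hasFDerivAt.pow 2
  rw [h.fderiv]
  simp only [sum_apply, smul_apply, smul_eq_mul, Finset.mul_sum]
  refine Finset.sum_congr rfl fun i _ => ?_
  simp only [nsmul_eq_mul]
  ring

theorem fderiv_density_apply {Φ c : ℝ → ℝ} {Φ' c' : ℝ} {θ : E → ℝ} {q : E → ι → ℝ}
    (hΦ : HasDerivAt Φ Φ' (θ x)) (hc : HasDerivAt c c' (θ x)) (hθ : DifferentiableAt ℝ θ x)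
    (hq : ∀ i, DifferentiableAt ℝ (fun y => q y i) x) (v : E) :
    fderiv ℝ (fun y => Φ (θ y) + c (θ y) * ∑ i, q y i ^ 2) x v =
      (Φ' + c' * ∑ i, q x i ^ 2) * fderiv ℝ θ x v +
        2 * c (θ x) * ∑ i, q x i * fderiv ℝ (fun y => q y i) x v := by
  have hQ : DifferentiableAt ℝ (fun y => ∑ i, q y i ^ 2) x :=
    DifferentiableAt.fun_sum fun i _ => (hq i).pow 2
  have h : HasFDerivAt (fun y => Φ (θ y) + c (θ y) * ∑ i, q y i ^ 2)
      (Φ' • fderiv ℝ θ x + (c (θ x) • fderiv ℝ (fun y => ∑ i, q y i ^ 2) x +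
        (∑ i, q x i ^ 2) • c' • fderiv ℝ θ x)) x :=
    (hΦ.comp_hasFDerivAt x hθ.hasFDerivAt).add
      ((hc.comp_hasFDerivAt x hθ.hasFDerivAt).mul hQ.hasFDerivAt)
  rw [h.fderiv]
  simp only [add_apply, smul_apply, smul_eq_mul, fderiv_sum_sq_apply hq]
  ring

theorem sum_fderiv_div_apply {q : E → ι → ℝ} {θ : E → ℝ}
    (hq : ∀ i, DifferentiableAt ℝ (fun y => q y i) x) (hθ : DifferentiableAt ℝ θ x)
    (hθx : θ x ≠ 0) (e : ι → E) :
    ∑ i, fderiv ℝ (fun y => q y i / θ y) x (e i) =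
      (∑ i, fderiv ℝ (fun y => q y i) x (e i)) / θ x -
        (∑ i, q x i * fderiv ℝ θ x (e i)) / θ x ^ 2 := by
  simp only [fderiv_div_apply (hq _) hθ hθx, Finset.sum_sub_distrib, Finset.sum_div]

end DirectionalDerivative

theorem entropy_balance_is_SBL_general
    (κ τ : ℝ) (hκ : 0 < κ)
    (θf : ℝ × (Fin 3 → ℝ) → ℝ) (qf : ℝ × (Fin 3 → ℝ) → (Fin 3 → ℝ))
    (hθ : ContDiff ℝ 1 θf) (hq : ContDiff ℝ 1 qf)
    (hθpos : ∀ x, 0 < θf x)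
    (εeq seq : ℝ → ℝ) (hεeq : ContDiff ℝ 1 εeq) (hseq : ContDiff ℝ 1 seq)
    (hGibbs : ∀ u > (0 : ℝ), deriv seq u = deriv εeq u / u)
    -- energy balance: ∂_t ε + div q = 0, with ε = ε^eq(θ) + (τ/(θκ))‖q‖²
    (hEnergy : ∀ x,
      dt (fun y => εeq (θf y) + (τ / (θf y * κ)) * ∑ A, (qf y A) ^ 2) x +
        ∑ A, dX A (fun y => qf y A) x = 0)
    -- Cattaneo equation: τ ∂_t q^A + κ ∂_{x^A} θ = −q^A
    (hCattaneo : ∀ (A : Fin 3) x,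
      τ * dt (fun y => qf y A) x + κ * dX A θf x = -qf x A) :
    -- entropy balance with nonnegative production ‖q‖²/(κθ²)
    ∀ x,
      dt (fun y => seq (θf y) + (τ / (2 * (θf y) ^ 2 * κ)) * ∑ A, (qf y A) ^ 2) x +
        ∑ A, dX A (fun y => qf y A / θf y) x =
      (∑ A, (qf x A) ^ 2) / (κ * (θf x) ^ 2) := by
  intro x
  have hθx : θf x ≠ 0 := (hθpos x).ne'
  have hκ0 : κ ≠ 0 := hκ.ne'
  have hθd : DifferentiableAt ℝ θf x := hθ.differentiable one_ne_zero x
  have hqd (A : Fin 3) : DifferentiableAt ℝ (fun y => qf y A) x :=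
    (contDiff_pi.mp hq A).differentiable one_ne_zero x
  have hc₁ : HasDerivAt (fun u => τ / (u * κ)) (-τ / (θf x ^ 2 * κ)) (θf x) :=
    ((hasDerivAt_const _ τ).div ((hasDerivAt_id' _).mul_const κ) (by positivity)).congr_deriv
      (by field_simp; ring)
  have hc₂ : HasDerivAt (fun u => τ / (2 * u ^ 2 * κ)) (-τ / (θf x ^ 3 * κ)) (θf x) :=
    ((hasDerivAt_const _ τ).div (((hasDerivAt_pow 2 _).const_mul 2).mul_const κ)
      (by positivity)).congr_deriv (by field_simp; ring)
  have hFlux : κ * ∑ A, qf x A * dX A θf x =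
      -∑ A, qf x A ^ 2 - τ * ∑ A, qf x A * dt (fun y => qf y A) x := by
    simp only [Finset.mul_sum, ← Finset.sum_neg_distrib, ← Finset.sum_sub_distrib]
    exact Finset.sum_congr rfl fun A _ => by linear_combination qf x A * hCattaneo A x
  have hE := hEnergy x
  unfold dt dX at hE hFlux ⊢
  rw [fderiv_density_apply (hεeq.differentiable one_ne_zero _).hasDerivAt hc₁ hθd hqd] at hE
  rw [fderiv_density_apply (hseq.differentiable one_ne_zero _).hasDerivAt hc₂ hθd hqd,
    sum_fderiv_div_apply hqd hθd hθx (fun A => (0, Pi.single A 1)), hGibbs _ (hθpos x)]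
  linear_combination (norm := (field_simp; ring)) hE / θf x - hFlux / (κ * θf x ^ 2)

theorem entropy_balance_is_SBL
    (κ τ : ℝ) (hκ : 0 < κ) (hτ : 0 < τ)
    (θf : ℝ × (Fin 3 → ℝ) → ℝ) (qf : ℝ × (Fin 3 → ℝ) → (Fin 3 → ℝ))
    (hθ : ContDiff ℝ 1 θf) (hq : ContDiff ℝ 1 qf)
    (hθpos : ∀ x, 0 < θf x)
    (εeq seq : ℝ → ℝ) (hεeq : ContDiff ℝ 1 εeq) (hseq : ContDiff ℝ 1 seq)
    (hGibbs : ∀ u > (0 : ℝ), deriv seq u = deriv εeq u / u)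
    -- energy balance: ∂_t ε + div q = 0, with ε = ε^eq(θ) + (τ/(θκ))‖q‖²
    (hEnergy : ∀ x,
      dt (fun y => εeq (θf y) + (τ / (θf y * κ)) * ∑ A, (qf y A) ^ 2) x +
        ∑ A, dX A (fun y => qf y A) x = 0)
    -- Cattaneo equation: τ ∂_t q^A + κ ∂_{x^A} θ = −q^A
    (hCattaneo : ∀ (A : Fin 3) x,
      τ * dt (fun y => qf y A) x + κ * dX A θf x = -qf x A) :
    -- entropy balance with nonnegative production ‖q‖²/(κθ²)
    ∀ x,
      dt (fun y => seq (θf y) + (τ / (2 * (θf y) ^ 2 * κ)) * ∑ A, (qf y A) ^ 2) x +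
        ∑ A, dX A (fun y => qf y A / θf y) x =
      (∑ A, (qf x A) ^ 2) / (κ * (θf x) ^ 2) :=
  entropy_balance_is_SBL_general κ τ hκ θf qf hθ hq hθpos εeq seq hεeq hseq hGibbs hEnergy hCattaneo
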